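/- arXiv:1912.01212 — 4 statements merged into one kernel-verified Lean document; each statement's English description precedes it below -/
import Mathlib

section
/- For every integer s ≥ 3, the topological interior of the dilated polytope 2·Q_s = {2x : x ∈ Q_s}, where Q_s is the stable set polytope of the cycle C_{2s+1}, contains no lattice point; that is, int(2Q_s) ∩ ℤ^{2s+1} = ∅. -/
open Pointwise

/-- `W` is a stable (independent) set of the cycle `C_{2s+1}` on vertex set `Fin (2*s+1)`,
whose edges are `{i, i+1}` with addition modulo `2s+1`. -/
def IsStableSet (s : ℕ) (W : Finset (Fin (2 * s + 1))) : Prop :=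
  ∀ i : Fin (2 * s + 1), ¬(i ∈ W ∧ i + 1 ∈ W)

/-- The stable set polytope of the odd cycle `C_{2s+1}`: the convex hull of the indicator
vectors of the stable sets of `C_{2s+1}`. -/
def stableSetPolytope (s : ℕ) : Set (Fin (2 * s + 1) → ℝ) :=
  convexHull ℝ {x | ∃ W : Finset (Fin (2 * s + 1)), IsStableSet s W ∧
    x = fun i => if i ∈ W then (1 : ℝ) else 0}

lemma stable_card_le (s : ℕ) (W : Finset (Fin (2 * s + 1))) (hW : IsStableSet s W) :
    W.card ≤ s := by
  have hinj : Function.Injective (fun i : Fin (2 * s + 1) => i + 1) :=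
    add_left_injective 1
  have hdisj : Disjoint W (W.image (fun i => i + 1)) := by
    rw [Finset.disjoint_right]
    intro j hj hjW
    obtain ⟨i, hi, rfl⟩ := Finset.mem_image.mp hj
    exact hW i ⟨hi, hjW⟩
  have h1 : (W ∪ W.image (fun i => i + 1)).card ≤ 2 * s + 1 := by
    have := Finset.card_le_univ (W ∪ W.image (fun i => i + 1))
    simpa using this
  rw [Finset.card_union_of_disjoint hdisj, Finset.card_image_of_injective _ hinj] at h1
  omega

lemma mem_poly_bounds (s : ℕ) {y : Fin (2 * s + 1) → ℝ} (hy : y ∈ stableSetPolytope s) :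
    (∀ i, 0 ≤ y i ∧ y i ≤ 1) ∧ ∑ i, y i ≤ s := by
  have hsub : stableSetPolytope s ⊆
      {y : Fin (2 * s + 1) → ℝ | (∀ i, 0 ≤ y i ∧ y i ≤ 1) ∧ ∑ i, y i ≤ s} := by
    apply convexHull_min
    · rintro x ⟨W, hW, rfl⟩
      constructor
      · intro i; by_cases h : i ∈ W <;> simp [h]
      · have h1 : ∑ i, (if i ∈ W then (1 : ℝ) else 0) = (W.card : ℝ) := by
          rw [Finset.sum_ite_mem, Finset.univ_inter, Finset.card_eq_sum_ones]
          push_cast; rfl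
        rw [h1]
        exact_mod_cast stable_card_le s W hW
    · intro p hp q hq a b ha hb hab
      obtain ⟨hp1, hp2⟩ := hp
      obtain ⟨hq1, hq2⟩ := hq
      constructor
      · intro i
        obtain ⟨h1, h2⟩ := hp1 i
        obtain ⟨h3, h4⟩ := hq1 i
        constructor
        · have : (a • p + b • q) i = a * p i + b * q i := rfl
          rw [this]; nlinarith
        · have : (a • p + b • q) i = a * p i + b * q i := rfl
          rw [this]; nlinarith
      · have : ∑ i, (a • p + b • q) i = a * ∑ i, p i + b * ∑ i, q i := by
          simp [Finset.mul_sum, Finset.sum_add_distrib]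
        rw [this]; nlinarith
  exact hsub hy

/-- For `s ≥ 3`, the interior of the dilation `2 • Q_s` of the stable set polytope of
`C_{2s+1}` contains no lattice point. -/
theorem interior_two_smul_stableSetPolytope_no_lattice_point (s : ℕ) (hs : 3 ≤ s) :
    ∀ x ∈ interior ((2 : ℝ) • stableSetPolytope s), ¬(∀ i, ∃ m : ℤ, x i = (m : ℝ)) := by
  intro x hx hlat
  set S := (2 : ℝ) • stableSetPolytope s with hS
  -- bounds for any member of S
  have hSbound : ∀ z ∈ S, (∀ i, 0 ≤ z i ∧ z i ≤ 2) ∧ ∑ i, z i ≤ 2 * s := by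
    intro z hz
    obtain ⟨y, hy, rfl⟩ := hz
    obtain ⟨h1, h2⟩ := mem_poly_bounds s hy
    constructor
    · intro i
      obtain ⟨ha, hb⟩ := h1 i
      constructor
      · show (0:ℝ) ≤ 2 * y i
        linarith
      · show (2:ℝ) * y i ≤ 2
        linarith
    · show ∑ i, ((2:ℝ) * y i) ≤ 2 * (s:ℝ)
      rw [← Finset.mul_sum]; linarith
  -- get a ball around x inside S
  obtain ⟨ε, hε, hball⟩ := Metric.mem_nhds_iff.mp (mem_interior_iff_mem_nhds.mp hx)
  -- each coordinate is strictly between 0 and 2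
  have hcoord : ∀ i, 0 < x i ∧ x i < 2 := by
    intro i
    have hmem : ∀ (c : ℝ), |c| < ε → Function.update x i (x i + c) ∈ S := by
      intro c hc
      apply hball
      rw [Metric.mem_ball, dist_pi_lt_iff hε]
      intro j
      by_cases h : j = i
      · subst h; simp [Function.update_self, Real.dist_eq]
        simpa [abs_sub_comm] using hc
      · simp [Function.update_of_ne h, hε]
    constructor
    · have h1 := (hSbound _ (hmem (-(ε/2)) (by rw [abs_neg, abs_of_pos (by linarith)]; linarith))).1 i
      rw [Function.update_self] at h1
      linarith [h1.1]
    · have h1 := (hSbound _ (hmem (ε/2) (by rw [abs_of_pos (by linarith)]; linarith))).1 i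
      rw [Function.update_self] at h1
      linarith [h1.2]
  -- lattice + strict bounds forces x i = 1
  have hone : ∀ i, x i = 1 := by
    intro i
    obtain ⟨m, hm⟩ := hlat i
    obtain ⟨h0, h2⟩ := hcoord i
    rw [hm] at h0 h2 ⊢
    have hm0 : (0 : ℤ) < m := by exact_mod_cast h0
    have hm2 : m < 2 := by exact_mod_cast h2
    have : m = 1 := by omega
    rw [this]; norm_num
  -- sum contradiction
  have hsum := (hSbound x (interior_subset hx)).2
  have : ∑ i, x i = (2 * s + 1 : ℝ) := by
    simp [hone]
  rw [this] at hsum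
  have : (3 : ℝ) ≤ s := by exact_mod_cast hs
  linarith
end

section
/- For every integer s ≥ 1, the face F = {x ∈ Q_s : x_1 + ⋯ + x_{2s+1} = s} of the stable set polytope Q_s of the cycle C_{2s+1} is a facet; that is, the affine span of F has dimension 2s (equivalently, the direction of the affine span of F has ℝ-dimension 2s). -/
namespace FacetAux

open Fin.CommRing

/-- The maximum stable set `{k, k+2, ..., k+2(s-1)}` of the odd cycle. -/
def Wk (s : ℕ) (k : Fin (2*s+1)) : Finset (Fin (2*s+1)) :=
  (Finset.range s).image (fun t => k + ((2*t : ℕ) : Fin (2*s+1)))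

lemma mem_Wk {s : ℕ} {k i : Fin (2*s+1)} :
    i ∈ Wk s k ↔ ((i - k).val % 2 = 0 ∧ (i - k).val < 2*s) := by
  constructor
  · intro h
    simp only [Wk, Finset.mem_image, Finset.mem_range] at h
    obtain ⟨t, ht, rfl⟩ := h
    have h1 : (k + ((2*t:ℕ) : Fin (2*s+1)) - k) = ((2*t:ℕ) : Fin (2*s+1)) := by abel
    rw [h1, Fin.val_natCast, Nat.mod_eq_of_lt (show 2*t < 2*s+1 by omega)]
    omega
  · rintro ⟨h1, h2⟩
    simp only [Wk, Finset.mem_image, Finset.mem_range]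
    refine ⟨(i-k).val / 2, by omega, ?_⟩
    have h3 : ((2 * ((i - k).val / 2) : ℕ) : Fin (2*s+1)) = i - k := by
      apply Fin.ext
      rw [Fin.val_natCast,
        Nat.mod_eq_of_lt (show 2 * ((i - k).val / 2) < 2*s+1 by omega)]
      omega
    rw [h3]; abel

lemma card_Wk {s : ℕ} (k : Fin (2*s+1)) : (Wk s k).card = s := by
  rw [Wk, Finset.card_image_of_injOn, Finset.card_range]
  intro a ha b hb hab
  simp only [Finset.coe_range, Set.mem_Iio] at ha hb
  have h1 : ((2*a : ℕ) : Fin (2*s+1)) = ((2*b : ℕ) : Fin (2*s+1)) := add_left_cancel hab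
  have h2 := congrArg Fin.val h1
  rw [Fin.val_natCast, Fin.val_natCast, Nat.mod_eq_of_lt (show 2*a < 2*s+1 by omega),
    Nat.mod_eq_of_lt (show 2*b < 2*s+1 by omega)] at h2
  omega

lemma stable_Wk {s : ℕ} (hs : 1 ≤ s) (k : Fin (2*s+1)) : IsStableSet s (Wk s k) := by
  rintro i ⟨h1, h2⟩
  rw [mem_Wk] at h1 h2
  have hk : (i + 1 - k) = (i - k) + 1 := by ring
  rw [hk] at h2
  have hv : ((i - k) + 1).val = ((i-k).val + 1) % (2*s+1) := by
    rw [Fin.val_add, Fin.val_one']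
    congr 1
    rw [Nat.mod_eq_of_lt (show 1 < 2*s+1 by omega)]
  rw [hv, Nat.mod_eq_of_lt (show (i-k).val + 1 < 2*s+1 by omega)] at h2
  omega

/-- The vertex of the polytope corresponding to `Wk s k`. -/
def pt (s : ℕ) (k : Fin (2*s+1)) : Fin (2*s+1) → ℝ := fun i => if i ∈ Wk s k then 1 else 0

lemma pt_mem {s : ℕ} (hs : 1 ≤ s) (k : Fin (2*s+1)) : pt s k ∈ stableSetPolytope s :=
  subset_convexHull ℝ _ ⟨Wk s k, stable_Wk hs k, rfl⟩

lemma sum_pt {s : ℕ} (k : Fin (2*s+1)) : ∑ i, pt s k i = (s : ℝ) := by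
  simp only [pt]
  rw [Finset.sum_ite_mem, Finset.univ_inter, Finset.sum_const, card_Wk, nsmul_eq_mul, mul_one]

lemma indicator_diff {s : ℕ} (hs : 1 ≤ s) (c i : Fin (2*s+1)) :
    ((if i ∈ Wk s c then (1:ℝ) else 0) - (if i ∈ Wk s (c + 2) then 1 else 0))
      = (if i = c then 1 else 0) - (if i = c - 1 then 1 else 0) := by
  have hd : (i - (c+2)) = (i - c) - 2 := by ring
  have hdlt : (i - c).val < 2*s+1 := (i - c).isLt
  have h2v : ((2 : Fin (2*s+1))).val = 2 := by
    have h0 : ((2:ℕ) : Fin (2*s+1)) = 2 := by push_cast; ring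
    rw [← h0, Fin.val_natCast, Nat.mod_eq_of_lt (show 2 < 2*s+1 by omega)]
  have hsubv : ((i - c) - 2).val = ((i - c).val + ((2*s+1) - 2)) % (2*s+1) := by
    rw [Fin.sub_def, h2v]
    simp only []
    rw [Nat.add_comm]
  have e1 : (i = c) ↔ (i - c).val = 0 := by
    rw [← sub_eq_zero]
    constructor
    · intro h; rw [h]; rfl
    · intro h; exact Fin.ext (by rw [h]; rfl)
  have e2 : (i = c - 1) ↔ (i - c).val = 2*s := by
    have h1 : c - 1 = -1 + c := by ring
    rw [h1, ← sub_eq_iff_eq_add]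
    constructor
    · intro h; rw [h, Fin.coe_neg_one]
    · intro h; exact Fin.ext (by rw [h, Fin.coe_neg_one])
  simp only [mem_Wk, hd, if_congr e1 rfl rfl, if_congr e2 rfl rfl]
  rcases Nat.lt_or_ge (i - c).val 2 with h | h
  · have he : ((i - c) - 2).val = (i - c).val + 2*s - 1 := by
      rw [hsubv]
      have h4 : (i - c).val + ((2*s+1) - 2) = (i - c).val + 2*s - 1 := by omega
      rw [h4, Nat.mod_eq_of_lt (show (i-c).val + 2*s - 1 < 2*s+1 by omega)]
    rw [he]
    split_ifs <;> first | (exfalso; omega) | norm_num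
  · have he : ((i - c) - 2).val = (i - c).val - 2 := by
      rw [hsubv]
      have h4 : (i - c).val + ((2*s+1) - 2) = ((i - c).val - 2) + (2*s+1) := by omega
      rw [h4, Nat.add_mod_right,
        Nat.mod_eq_of_lt (show (i-c).val - 2 < 2*s+1 by omega)]
    rw [he]
    split_ifs <;> first | (exfalso; omega) | norm_num

lemma pt_diff {s : ℕ} (hs : 1 ≤ s) (c : Fin (2*s+1)) :
    pt s c - pt s (c+2) = Pi.single c (1:ℝ) - Pi.single (c-1) 1 := by
  funext i
  simp only [Pi.sub_apply, pt, Pi.single_apply]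
  exact indicator_diff hs c i

/-- The difference family `e_{j+1} - e_j`. -/
def vvec (s : ℕ) (j : Fin (2*s)) : Fin (2*s+1) → ℝ :=
  Pi.single j.succ 1 - Pi.single j.castSucc 1

/-- Auxiliary "partial sum from above" linear map. -/
def T (m : ℕ) : (Fin (m+1) → ℝ) →ₗ[ℝ] (Fin m → ℝ) where
  toFun x := fun j => ∑ k : Fin (m+1), if (j:ℕ) < (k:ℕ) then x k else 0
  map_add' x y := by
    funext j
    simp only [Pi.add_apply]
    rw [← Finset.sum_add_distrib]
    exact Finset.sum_congr rfl fun k _ => by split <;> simp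
  map_smul' c x := by
    funext j
    simp only [Pi.smul_apply, smul_eq_mul, RingHom.id_apply]
    rw [Finset.mul_sum]
    exact Finset.sum_congr rfl fun k _ => by split <;> simp

lemma T_single (m : ℕ) (a : Fin (m+1)) (j : Fin m) :
    T m (Pi.single a 1) j = if (j:ℕ) < (a:ℕ) then (1:ℝ) else 0 := by
  simp only [T, LinearMap.coe_mk, AddHom.coe_mk]
  rw [Finset.sum_eq_single a]
  · simp [Pi.single_apply]
  · intro k _ hk; simp [Pi.single_apply, hk]
  · simp

lemma li_vvec (s : ℕ) : LinearIndependent ℝ (vvec s) := by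
  apply LinearIndependent.of_comp (T (2*s))
  have hcomp : (⇑(T (2*s)) ∘ vvec s) = fun j : Fin (2*s) => Pi.single j (1:ℝ) := by
    funext j j'
    simp only [Function.comp_apply, vvec, map_sub, Pi.sub_apply]
    rw [T_single, T_single]
    rw [Pi.single_apply, Fin.val_succ, Fin.coe_castSucc]
    have h : (j' = j) ↔ ((j':ℕ) = (j:ℕ)) := Fin.ext_iff
    rw [if_congr h rfl rfl]
    split_ifs <;> first | (exfalso; omega) | norm_num
  rw [hcomp]
  have h2 : (fun j : Fin (2*s) => Pi.single j (1:ℝ)) = ⇑(Pi.basisFun ℝ (Fin (2*s))) := by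
    funext j; simp [Pi.basisFun_apply]
  rw [h2]
  exact (Pi.basisFun ℝ (Fin (2*s))).linearIndependent

lemma vvec_eq_pt_diff {s : ℕ} (hs : 1 ≤ s) (j : Fin (2*s)) :
    vvec s j = pt s j.succ - pt s (j.succ + 2) := by
  rw [pt_diff hs]
  have h1 : (j.succ : Fin (2*s+1)) - 1 = j.castSucc := by
    rw [← Fin.coeSucc_eq_succ]
    exact add_sub_cancel_right _ _
  rw [vvec, h1]

end FacetAux

open FacetAux

/-- The face `F = {x ∈ Q_s : x 1 + ⋯ + x (2s+1) = s}` of the stable set polytope of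
`C_{2s+1}` is a facet: the direction of its affine span has dimension `2s`. -/
theorem facet_of_stableSetPolytope (s : ℕ) (hs : 1 ≤ s) :
    Module.finrank ℝ
      ↥(vectorSpan ℝ {x | x ∈ stableSetPolytope s ∧ ∑ i, x i = (s : ℝ)}) = 2 * s := by
  classical
  set F : Set (Fin (2*s+1) → ℝ) :=
    {x | x ∈ stableSetPolytope s ∧ ∑ i, x i = (s : ℝ)} with hF
  -- the sum functional
  set L : (Fin (2*s+1) → ℝ) →ₗ[ℝ] ℝ := ∑ i : Fin (2*s+1), LinearMap.proj i with hLdef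
  have hL : ∀ x : Fin (2*s+1) → ℝ, L x = ∑ i, x i := by
    intro x
    rw [hLdef]
    simp [LinearMap.sum_apply, LinearMap.proj_apply]
  have hsurj : Function.Surjective L := by
    intro c
    refine ⟨fun i => if i = 0 then c else 0, ?_⟩
    rw [hL]
    simp
  have hker : Module.finrank ℝ (LinearMap.ker L) = 2*s := by
    have h1 := LinearMap.finrank_range_add_finrank_ker L
    rw [LinearMap.range_eq_top.mpr hsurj, finrank_top, Module.finrank_fin_fun,
      Module.finrank_self] at h1
    omega
  -- upper bound
  have hub : vectorSpan ℝ F ≤ LinearMap.ker L := by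
    rw [vectorSpan_def]
    rw [Submodule.span_le]
    rintro v ⟨a, ha, b, hb, rfl⟩
    show L (a - b) = 0
    rw [hL]
    simp only [Pi.sub_apply]
    rw [Finset.sum_sub_distrib, ha.2, hb.2, sub_self]
  have upper : Module.finrank ℝ (vectorSpan ℝ F) ≤ 2*s := by
    have h2 := Submodule.finrank_mono hub
    omega
  -- lower bound
  have hmem : ∀ j : Fin (2*s), vvec s j ∈ vectorSpan ℝ F := by
    intro j
    rw [vvec_eq_pt_diff hs j]
    have h1 : pt s j.succ ∈ F := ⟨pt_mem hs _, sum_pt _⟩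
    have h2 : pt s (j.succ + 2) ∈ F := ⟨pt_mem hs _, sum_pt _⟩
    exact vsub_mem_vectorSpan ℝ h1 h2
  have hspan : Submodule.span ℝ (Set.range (vvec s)) ≤ vectorSpan ℝ F :=
    Submodule.span_le.2 (Set.range_subset_iff.2 hmem)
  have lower : 2*s ≤ Module.finrank ℝ (vectorSpan ℝ F) := by
    have h1 := finrank_span_eq_card (li_vvec s)
    rw [Fintype.card_fin] at h1
    have h2 := Submodule.finrank_mono hspan
    omega
  omega
end

section
/- For every integer s ≥ 3, let P_s = 3·Q_s − (1,…,1) = {3x − (1,…,1) : x ∈ Q_s} ⊆ ℝ^{2s+1}, where Q_s is the stable set polytope of the cycle C_{2s+1}. Then the origin lies in the topological interior of P_s, every point x ∈ P_s satisfies x_1 + ⋯ + x_{2s+1} ≤ s − 1, and there exists a point of P_s at which equality holds. -/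
open Finset

lemma card_evenFilter (s : ℕ) :
    (Finset.univ.filter (fun u : Fin (2*s+1) => u.val % 2 = 0 ∧ u.val < 2*s)).card = s := by
  have h : (Finset.univ.filter (fun u : Fin (2*s+1) => u.val % 2 = 0 ∧ u.val < 2*s)).card
      = (Finset.range s).card := by
    apply Finset.card_bij' (fun u _ => u.val / 2)
      (fun k hk => (⟨2*k, by simp only [Finset.mem_range] at hk; omega⟩ : Fin (2*s+1)))
    case hi =>
      intro a ha
      simp only [Finset.mem_filter, Finset.mem_univ, true_and] at ha
      simp only [Finset.mem_range]; omega
    case hj =>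
      intro k hk
      simp only [Finset.mem_filter, Finset.mem_univ, true_and]
      simp only [Finset.mem_range] at hk
      omega
    case left_inv =>
      intro a ha
      simp only [Finset.mem_filter, Finset.mem_univ, true_and] at ha
      apply Fin.ext; simp; omega
    case right_inv =>
      intro k hk
      simp only [Finset.mem_range] at hk
      simp
  rw [h, Finset.card_range]

def maxStable (s : ℕ) (j : Fin (2*s+1)) : Finset (Fin (2*s+1)) :=
  Finset.univ.filter (fun v => (v - j).val % 2 = 0 ∧ (v - j).val < 2*s)

lemma mem_maxStable {s : ℕ} {j v : Fin (2*s+1)} :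
    v ∈ maxStable s j ↔ (v - j).val % 2 = 0 ∧ (v - j).val < 2*s := by
  simp [maxStable]

lemma isStableSet_maxStable (s : ℕ) (hs : 1 ≤ s) (j : Fin (2*s+1)) :
    IsStableSet s (maxStable s j) := by
  rintro i ⟨h1, h2⟩
  rw [mem_maxStable] at h1 h2
  have key : i + 1 - j = (i - j) + 1 := add_sub_right_comm i 1 j
  rw [key] at h2
  have hlast : (i - j) < Fin.last (2*s) := by
    rw [Fin.lt_def, Fin.val_last]; exact h1.2
  have hv : ((i - j) + 1).val = (i - j).val + 1 := Fin.val_add_one_of_lt hlast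
  omega

lemma isStableSet_singleton (s : ℕ) (hs : 1 ≤ s) (k : Fin (2*s+1)) :
    IsStableSet s {k} := by
  rintro i ⟨h1, h2⟩
  rw [Finset.mem_singleton] at h1 h2
  subst h1
  have h0 : (1 : Fin (2*s+1)) = 0 := add_eq_left.mp h2
  have h1' := congrArg Fin.val h0
  rw [Fin.val_one', Fin.val_zero, Nat.mod_eq_of_lt (by omega)] at h1'
  exact one_ne_zero h1'

lemma isStableSet_empty (s : ℕ) : IsStableSet s ∅ := by
  rintro i ⟨h1, _⟩; simp at h1

lemma card_cover (s : ℕ) (v : Fin (2*s+1)) :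
    (Finset.univ.filter (fun j => v ∈ maxStable s j)).card = s := by
  have h : (Finset.univ.filter (fun j => v ∈ maxStable s j)).card
      = (Finset.univ.filter (fun u : Fin (2*s+1) => u.val % 2 = 0 ∧ u.val < 2*s)).card := by
    apply Finset.card_bij' (fun j _ => v - j) (fun u _ => v - u)
    case hi =>
      intro a ha
      simp only [Finset.mem_filter, Finset.mem_univ, true_and, mem_maxStable] at ha ⊢
      exact ha
    case hj =>
      intro u hu
      simp only [Finset.mem_filter, Finset.mem_univ, true_and, mem_maxStable] at hu ⊢
      rwa [sub_sub_cancel]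
    case left_inv => intro a _; exact sub_sub_cancel v a
    case right_inv => intro u _; exact sub_sub_cancel v u
  rw [h, card_evenFilter]

lemma indicator_mem (s : ℕ) {W : Finset (Fin (2*s+1))} (hW : IsStableSet s W) :
    (fun i => if i ∈ W then (1:ℝ) else 0) ∈ stableSetPolytope s :=
  subset_convexHull ℝ _ ⟨W, hW, rfl⟩

lemma card_le_of_stable (s : ℕ) {W : Finset (Fin (2*s+1))} (hW : IsStableSet s W) :
    W.card ≤ s := by
  have hinj : Function.Injective (fun i : Fin (2*s+1) => i + 1) := add_left_injective 1
  have hsub : W.image (fun i => i + 1) ⊆ Wᶜ := by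
    intro x hx
    simp only [Finset.mem_image] at hx
    obtain ⟨i, hi, rfl⟩ := hx
    simp only [Finset.mem_compl]
    exact fun h => hW i ⟨hi, h⟩
  have h1 : W.card ≤ Wᶜ.card := by
    rw [← Finset.card_image_of_injective W hinj]
    exact Finset.card_le_card hsub
  have h2 : Wᶜ.card = (2*s+1) - W.card := by
    rw [Finset.card_compl]; simp
  omega

lemma sum_le_of_mem_Q (s : ℕ) {y : Fin (2*s+1) → ℝ} (hy : y ∈ stableSetPolytope s) :
    ∑ i, y i ≤ (s : ℝ) := by
  have hlin : IsLinearMap ℝ (fun y : Fin (2*s+1) → ℝ => ∑ i, y i) :=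
    ⟨fun a b => Finset.sum_add_distrib, fun c a => by simp [Finset.mul_sum]⟩
  have hconv : Convex ℝ {y : Fin (2*s+1) → ℝ | ∑ i, y i ≤ (s:ℝ)} :=
    convex_halfSpace_le hlin _
  have hsub : {x | ∃ W : Finset (Fin (2*s+1)), IsStableSet s W ∧
      x = fun i => if i ∈ W then (1:ℝ) else 0} ⊆ {y | ∑ i, y i ≤ (s:ℝ)} := by
    rintro x ⟨W, hW, rfl⟩
    simp only [Set.mem_setOf_eq]
    rw [Finset.sum_boole]
    have h : Finset.univ.filter (fun i => i ∈ W) = W := by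
      ext i; simp
    rw [h]
    exact_mod_cast card_le_of_stable s hW
  exact convexHull_min hsub hconv hy

lemma mem_Q_of_close (s : ℕ) (hs : 3 ≤ s) (y : Fin (2*s+1) → ℝ)
    (hy : ∀ i, |y i - 1/3| ≤ ((s:ℝ)-1)/(6*(2*(s:ℝ)+1)*(s:ℝ))) :
    y ∈ stableSetPolytope s := by
  classical
  have hs3 : (3:ℝ) ≤ (s:ℝ) := by exact_mod_cast hs
  set ε : ℝ := ((s:ℝ)-1)/(6*(2*(s:ℝ)+1)*(s:ℝ)) with hεdef
  have hε0 : 0 < ε := by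
    apply div_pos <;> nlinarith
  have hεsmall : ε ≤ 1/3 := by
    rw [hεdef, div_le_iff₀ (by nlinarith)]
    nlinarith
  set μ : ℝ := (1 - 3*ε)/(3*(s:ℝ)) with hμdef
  set c : Fin (2*s+1) → ℝ := fun i => y i - (1 - 3*ε)/3 with hcdef
  set c0 : ℝ := 1 - (2*(s:ℝ)+1)*μ - ∑ i, c i with hc0def
  have hμ0 : 0 ≤ μ := by
    apply div_nonneg <;> nlinarith
  have hcnn : ∀ i, 0 ≤ c i := by
    intro i
    have := abs_le.mp (hy i)
    simp only [hcdef]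
    linarith [this.1]
  have hcub : ∀ i, c i ≤ 2*ε := by
    intro i
    have := abs_le.mp (hy i)
    simp only [hcdef]
    linarith [this.2]
  have hsumc : ∑ i, c i ≤ (2*(s:ℝ)+1) * (2*ε) := by
    calc ∑ i, c i ≤ ∑ _i : Fin (2*s+1), 2*ε := Finset.sum_le_sum (fun i _ => hcub i)
    _ = (2*(s:ℝ)+1) * (2*ε) := by
        rw [Finset.sum_const, Finset.card_univ, Fintype.card_fin, nsmul_eq_mul]
        push_cast; ring
  have hc00 : 0 ≤ c0 := by
    have key : (2*(s:ℝ)+1) * (2*ε) = ((s:ℝ)-1)/(3*(s:ℝ)) := by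
      rw [hεdef]; field_simp; ring
    have hsum2 : ∑ i, c i ≤ ((s:ℝ)-1)/(3*(s:ℝ)) := key ▸ hsumc
    have hid : 1 - (2*(s:ℝ)+1)*((1-3*ε)/(3*(s:ℝ))) - ((s:ℝ)-1)/(3*(s:ℝ))
        = ε*(2*(s:ℝ)+1)/(s:ℝ) := by
      field_simp
      ring
    have hpos : 0 ≤ ε*(2*(s:ℝ)+1)/(s:ℝ) := by
      apply div_nonneg (by nlinarith) (by nlinarith)
    simp only [hc0def]
    rw [hμdef]
    linarith
  -- the points and weights
  set w : Option (Fin (2*s+1) ⊕ Fin (2*s+1)) → ℝ := fun t => match t with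
    | none => c0
    | some (Sum.inl _) => μ
    | some (Sum.inr i) => c i
    with hwdef
  set p : Option (Fin (2*s+1) ⊕ Fin (2*s+1)) → (Fin (2*s+1) → ℝ) := fun t => match t with
    | none => fun i => if i ∈ (∅ : Finset (Fin (2*s+1))) then (1:ℝ) else 0
    | some (Sum.inl j) => fun i => if i ∈ maxStable s j then (1:ℝ) else 0
    | some (Sum.inr k) => fun i => if i ∈ ({k} : Finset (Fin (2*s+1))) then (1:ℝ) else 0
    with hpdef
  have hwsum : ∑ t, w t = 1 := by
    rw [Fintype.sum_option, Fintype.sum_sum_type]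
    simp only [hwdef]
    rw [Finset.sum_const, Finset.card_univ, Fintype.card_fin, nsmul_eq_mul]
    simp only [hc0def]
    push_cast
    ring
  have hrep : y = ∑ t, w t • p t := by
    funext i
    rw [Finset.sum_apply]
    simp only [Pi.smul_apply, smul_eq_mul]
    rw [Fintype.sum_option, Fintype.sum_sum_type]
    simp only [hwdef, hpdef, Finset.notMem_empty, if_false, mul_zero, Finset.mem_singleton]
    have e1 : ∑ j, μ * (if i ∈ maxStable s j then (1:ℝ) else 0) = μ * (s:ℝ) := by
      rw [← Finset.mul_sum, Finset.sum_boole, card_cover]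
    have e2 : ∑ k, c k * (if i = k then (1:ℝ) else 0) = c i := by
      rw [Finset.sum_congr rfl (fun k _ => by rw [mul_ite, mul_one, mul_zero]),
        Finset.sum_ite_eq]
      simp
    rw [e1, e2]
    simp only [hcdef]
    have hsne : (s:ℝ) ≠ 0 := by nlinarith
    have hμs : μ * (s:ℝ) = (1 - 3*ε)/3 := by
      rw [hμdef]; field_simp
    rw [hμs]
    ring
  rw [hrep]
  apply (convex_convexHull ℝ _).sum_mem
  · intro t _
    match t with
    | none => exact hc00
    | some (Sum.inl j) => exact hμ0
    | some (Sum.inr k) => exact hcnn k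
  · exact hwsum
  · intro t _
    match t with
    | none => exact indicator_mem s (isStableSet_empty s)
    | some (Sum.inl j) => exact indicator_mem s (isStableSet_maxStable s (by omega) j)
    | some (Sum.inr k) => exact indicator_mem s (isStableSet_singleton s (by omega) k)

/-- For `s ≥ 3`, the polytope `P_s = 3 • Q_s - (1,…,1)` contains the origin in its interior,
every point `x ∈ P_s` satisfies `x 1 + ⋯ + x (2s+1) ≤ s - 1`, and equality holds at some
point of `P_s`. -/
theorem shifted_three_smul_stableSetPolytope (s : ℕ) (hs : 3 ≤ s) :
    (0 : Fin (2 * s + 1) → ℝ) ∈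
        interior ((fun x => (3 : ℝ) • x - fun _ => (1 : ℝ)) '' stableSetPolytope s) ∧
      (∀ x ∈ (fun x => (3 : ℝ) • x - fun _ => (1 : ℝ)) '' stableSetPolytope s,
        ∑ i, x i ≤ (s : ℝ) - 1) ∧
      (∃ x ∈ (fun x => (3 : ℝ) • x - fun _ => (1 : ℝ)) '' stableSetPolytope s,
        ∑ i, x i = (s : ℝ) - 1) := by
  have hs3 : (3:ℝ) ≤ (s:ℝ) := by exact_mod_cast hs
  refine ⟨?_, ?_, ?_⟩
  · -- interior
    set ε : ℝ := ((s:ℝ)-1)/(6*(2*(s:ℝ)+1)*(s:ℝ)) with hεdef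
    have hε0 : 0 < ε := by
      apply div_pos <;> nlinarith
    rw [mem_interior]
    refine ⟨Metric.ball 0 ε, ?_, Metric.isOpen_ball, Metric.mem_ball_self hε0⟩
    intro x hx
    have h1 : ‖x‖ < ε := by
      have := Metric.mem_ball.mp hx
      rwa [dist_eq_norm, sub_zero] at this
    have hxi : ∀ i, |x i| ≤ ε := fun i =>
      le_of_lt (lt_of_le_of_lt ((Real.norm_eq_abs (x i)) ▸ norm_le_pi_norm x i) h1)
    refine ⟨fun i => (x i + 1)/3, ?_, ?_⟩
    · apply mem_Q_of_close s hs
      intro i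
      have h := abs_le.mp (hxi i)
      rw [abs_le]
      constructor <;> [skip; skip] <;> [linarith [h.1, hε0.le]; linarith [h.2, hε0.le]]
    · funext i
      simp only [Pi.sub_apply, Pi.smul_apply, smul_eq_mul]
      ring
  · -- upper bound
    rintro x ⟨y, hyQ, rfl⟩
    have hsum := sum_le_of_mem_Q s hyQ
    show ∑ i, (((3:ℝ) • y - fun _ => (1:ℝ)) : Fin (2*s+1) → ℝ) i ≤ (s:ℝ) - 1
    have hfs : ∑ i, (((3:ℝ) • y - fun _ => (1:ℝ)) : Fin (2*s+1) → ℝ) i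
        = 3 * ∑ i, y i - (2*(s:ℝ)+1) := by
      simp only [Pi.sub_apply, Pi.smul_apply, smul_eq_mul]
      rw [Finset.sum_sub_distrib, ← Finset.mul_sum, Finset.sum_const, Finset.card_univ,
        Fintype.card_fin, nsmul_eq_mul]
      push_cast; ring
    rw [hfs]
    linarith
  · -- equality
    have hcard : (maxStable s 0).card = s := by
      have hW : maxStable s 0
          = Finset.univ.filter (fun v : Fin (2*s+1) => v.val % 2 = 0 ∧ v.val < 2*s) := by
        ext v
        simp [mem_maxStable, sub_zero]
      rw [hW, card_evenFilter]
    refine ⟨_, ⟨_, indicator_mem s (isStableSet_maxStable s (by omega) 0), rfl⟩, ?_⟩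
    simp only [Pi.sub_apply, Pi.smul_apply, smul_eq_mul]
    rw [Finset.sum_sub_distrib, ← Finset.mul_sum, Finset.sum_boole]
    have hfil : Finset.univ.filter (fun i => i ∈ maxStable s 0) = maxStable s 0 := by
      ext i; simp
    rw [hfil, hcard, Finset.sum_const, Finset.card_univ, Fintype.card_fin, nsmul_eq_mul]
    push_cast; ring
end

section
/- The sequence (h_0,…,h_9) = (1, 187, 5049, 37247, 96448, 96449, 37246, 5050, 187, 1) is an O-sequence that is not flawless: there exists an order ideal M of monomials such that the number of monomials of degree j in M equals h_j for 0 ≤ j ≤ 9, while the flawlessness condition fails because h_3 = 37247 > 37246 = h_6. -/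
/-- The sequence in question, as a function `ℕ → ℕ` (zero beyond index 9). -/
def h : ℕ → ℕ
  | 0 => 1
  | 1 => 187
  | 2 => 5049
  | 3 => 37247
  | 4 => 96448
  | 5 => 96449
  | 6 => 37246
  | 7 => 5050
  | 8 => 187
  | 9 => 1
  | _ => 0

/-- The degree of a monomial in the variables `Y_1, …, Y_r`, encoded as an exponent
vector `Fin r →₀ ℕ`: the sum of the exponents. -/
def mdegree {r : ℕ} (m : Fin r →₀ ℕ) : ℕ := m.sum fun _ e => e

/-- `M` is an order ideal of monomials: it is nonempty and closed under divisibility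
(i.e., under pointwise smaller exponent vectors). -/
def IsOrderIdeal {r : ℕ} (M : Set (Fin r →₀ ℕ)) : Prop :=
  M.Nonempty ∧ ∀ m ∈ M, ∀ m' : Fin r →₀ ℕ, m' ≤ m → m' ∈ M

namespace C11

/-! ### The construction

We build an order ideal in 187 variables as a disjoint union of 20 "staircases".
Staircase `t` occupies the variables with indices in `[off t, off t + W t 1)`, and
a monomial `m` of degree `d ≤ 9` belongs to staircase `t` iff its support is contained
in the prefix `[off t, off t + W t d)` of that block, where the width function
`j ↦ W t j` is nonincreasing.  Such a staircase is downward closed, and its degree-`j`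
slice is in bijection with `Sym (Fin (W t j)) j`, hence has `multichoose (W t j) j`
elements.  The width table below was found by computer search so that the slice
counts sum to exactly `h j` for every `j ≤ 9`. -/

/-- Width table: row `t` lists `W t j` for `j = 0, 1, …, 9` (entry at `j = 0`
duplicates the entry at `j = 1`). -/
def Wtab : List (List ℕ) :=
  [[109,109,95,58,37,23,14,8,4,1],
   [23,23,23,23,15,15,11,6,2,0],
   [14,14,14,13,12,11,8,6,2,0],
   [8,8,8,8,8,8,5,2,1,0],
   [6,6,6,6,6,5,4,2,1,0],
   [6,6,6,6,6,5,4,2,1,0],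
   [3,3,3,3,3,3,2,2,1,0],
   [3,3,3,3,3,2,1,1,0,0],
   [2,2,2,2,2,2,1,1,0,0],
   [2,2,2,2,2,2,1,0,0,0],
   [2,2,2,2,2,1,1,0,0,0],
   [1,1,1,1,1,1,1,0,0,0],
   [1,1,1,1,1,1,0,0,0,0],
   [1,1,1,1,1,1,0,0,0,0],
   [1,1,1,1,1,1,0,0,0,0],
   [1,1,1,1,1,0,0,0,0,0],
   [1,1,1,1,1,0,0,0,0,0],
   [1,1,1,1,0,0,0,0,0,0],
   [1,1,1,1,0,0,0,0,0,0],
   [1,1,1,0,0,0,0,0,0,0]]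

/-- `W t j` : width of staircase `t` at degree `j`. -/
def W (t j : ℕ) : ℕ := (Wtab.getD t []).getD j 0

/-- Offset of the variable block of staircase `t`. -/
def off : ℕ → ℕ
  | 0 => 0
  | t + 1 => off t + W t 1

/-- Fast formula for `Nat.multichoose`. -/
def mc (w j : ℕ) : ℕ := (w + j - 1).descFactorial j / Nat.factorial j

lemma multichoose_eq_mc (w j : ℕ) : Nat.multichoose w j = mc w j := by
  rw [Nat.multichoose_eq, Nat.choose_eq_descFactorial_div_factorial]; rfl

/-! ### Numeric facts, verified by `decide`. -/

lemma W_mono : ∀ t < 20, ∀ j < 10, ∀ j' < 10, j' ≤ j → W t j ≤ W t j' := by decide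

lemma W_bound : ∀ t < 20, ∀ j < 10, off t + W t j ≤ 187 := by decide

lemma W_disj : ∀ t < 20, ∀ t' < 20, t ≠ t' →
    off t + W t 0 ≤ off t' ∨ off t' + W t' 0 ≤ off t := by decide

lemma W_sum : ∀ j < 10, 1 ≤ j →
    (∑ t ∈ Finset.range 20, mc (W t j) j) = h j := by decide

/-! ### Generalities about `mdegree`. -/

lemma mdegree_eq_sum {r : ℕ} (m : Fin r →₀ ℕ) :
    mdegree m = ∑ i ∈ m.support, m i := rfl

lemma support_mono {r : ℕ} {m' m : Fin r →₀ ℕ} (hle : m' ≤ m) :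
    m'.support ⊆ m.support := by
  intro i hi
  rw [Finsupp.mem_support_iff] at hi ⊢
  intro h0
  exact hi (Nat.le_zero.mp (h0 ▸ Finsupp.le_def.mp hle i))

lemma mdegree_mono {r : ℕ} {m' m : Fin r →₀ ℕ} (hle : m' ≤ m) :
    mdegree m' ≤ mdegree m := by
  rw [mdegree_eq_sum, mdegree_eq_sum]
  calc ∑ i ∈ m'.support, m' i = ∑ i ∈ m.support, m' i :=
        Finset.sum_subset (support_mono hle) (by
          intro x _ hx
          rw [Finsupp.notMem_support_iff] at hx
          exact hx)
    _ ≤ ∑ i ∈ m.support, m i := Finset.sum_le_sum fun i _ => Finsupp.le_def.mp hle i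

lemma mdegree_zero {r : ℕ} : mdegree (0 : Fin r →₀ ℕ) = 0 := by
  simp [mdegree]

lemma mdegree_eq_zero_iff {r : ℕ} (m : Fin r →₀ ℕ) : mdegree m = 0 ↔ m = 0 := by
  constructor
  · intro h0
    ext i
    by_contra hi
    have hmem : i ∈ m.support := Finsupp.mem_support_iff.mpr (by simpa using hi)
    have := Finset.sum_eq_zero_iff.mp ((mdegree_eq_sum m) ▸ h0) i hmem
    simp at hi
    omega
  · rintro rfl; exact mdegree_zero

/-! ### Counting monomials with support in a fixed finite set. -/

/-- Monomials of degree `j` with support inside `s` are in bijection with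
`Sym s j`, a.k.a. multisets. -/
noncomputable def sliceEquivSym {r : ℕ} (s : Set (Fin r)) (j : ℕ) :
    {m : Fin r →₀ ℕ // ↑m.support ⊆ s ∧ mdegree m = j} ≃ Sym s j := by
  classical
  have e1 : {m : Fin r →₀ ℕ // ↑m.support ⊆ s ∧ mdegree m = j}
      ≃ {m : {m : Fin r →₀ ℕ // ↑m.support ⊆ s} // mdegree m.1 = j} :=
    (Equiv.subtypeSubtypeEquivSubtypeInter _ _).symm
  have e2 : {m : {m : Fin r →₀ ℕ // ↑m.support ⊆ s} // mdegree m.1 = j}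
      ≃ {f : (↥s →₀ ℕ) // f.sum (fun _ n => n) = j} := by
    refine Equiv.subtypeEquiv (Finsupp.restrictSupportEquiv s ℕ) ?_
    intro m
    have key : ((Finsupp.restrictSupportEquiv s ℕ) m).sum (fun _ n => n) = mdegree m.1 := by
      show (Finsupp.subtypeDomain (· ∈ s) m.1).sum (fun _ n => n) = m.1.sum (fun _ n => n)
      exact Finsupp.sum_subtypeDomain_index (p := (· ∈ s)) (v := m.1)
        (h := fun _ n => n) (fun x hx => m.2 hx)
    rw [key]
  have e3 : {f : (↥s →₀ ℕ) // f.sum (fun _ n => n) = j} ≃ Sym (↥s) j :=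
    { toFun := fun f => ⟨Finsupp.toMultiset f.1, by
        rw [Finsupp.card_toMultiset]; exact f.2⟩
      invFun := fun μ => ⟨Multiset.toFinsupp μ.1, by
        rw [show (Multiset.toFinsupp μ.1).sum (fun _ n => n) = Multiset.card μ.1 from
          Multiset.toFinsupp_sum_eq μ.1]
        exact μ.2⟩
      left_inv := fun f => Subtype.ext (Finsupp.toMultiset_toFinsupp f.1)
      right_inv := fun μ => Subtype.ext (Multiset.toFinsupp_toMultiset μ.1) }
  exact e1.trans (e2.trans e3)

/-- An explicit bijection between an interval in `Fin n` and `Fin w`. -/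
def intervalEquiv (a w n : ℕ) (H : a + w ≤ n) :
    ↥{i : Fin n | a ≤ i.val ∧ i.val < a + w} ≃ Fin w where
  toFun i := ⟨i.1.val - a, by have h := i.2; simp only [Set.mem_setOf_eq] at h; omega⟩
  invFun x := ⟨⟨a + x.val, by have := x.isLt; omega⟩, by
    simp only [Set.mem_setOf_eq]; have := x.isLt; omega⟩
  left_inv i := by
    apply Subtype.ext; apply Fin.ext
    have h := i.2; simp only [Set.mem_setOf_eq] at h
    simp only []
    omega
  right_inv x := by
    apply Fin.ext
    simp only []
    omega

lemma ncard_slice {r : ℕ} (a w j : ℕ) (H : a + w ≤ r) :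
    {m : Fin r →₀ ℕ | ↑m.support ⊆ {i : Fin r | a ≤ i.val ∧ i.val < a + w}
        ∧ mdegree m = j}.ncard = Nat.multichoose w j := by
  classical
  rw [← Nat.card_coe_set_eq]
  have E : ↥{m : Fin r →₀ ℕ | ↑m.support ⊆ {i : Fin r | a ≤ i.val ∧ i.val < a + w}
      ∧ mdegree m = j} ≃ Sym (Fin w) j :=
    (sliceEquivSym _ j).trans (Sym.equivCongr (intervalEquiv a w r H))
  rw [Nat.card_congr E, Nat.card_eq_fintype_card, Sym.card_sym_eq_multichoose,
    Fintype.card_fin]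

lemma finite_slice {r : ℕ} (s : Set (Fin r)) (j : ℕ) :
    {m : Fin r →₀ ℕ | ↑m.support ⊆ s ∧ mdegree m = j}.Finite := by
  apply Set.Finite.subset (Finsupp.finite_of_degree_le (σ := Fin r) j)
  intro m hm
  have : Finsupp.degree m = mdegree m := rfl
  simp only [Set.mem_setOf_eq] at hm ⊢
  omega

/-! ### The staircases. -/

/-- The variable block of staircase `t` at degree `j`. -/
def block (t j : ℕ) : Set (Fin 187) := {i | off t ≤ i.val ∧ i.val < off t + W t j}

/-- Staircase `t`. -/
def S (t : ℕ) : Set (Fin 187 →₀ ℕ) :=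
  {m | mdegree m ≤ 9 ∧ ↑m.support ⊆ block t (mdegree m)}

/-- The order ideal. -/
def M : Set (Fin 187 →₀ ℕ) := ⋃ t ∈ Finset.range 20, S t

lemma zero_mem_M : (0 : Fin 187 →₀ ℕ) ∈ M := by
  refine Set.mem_biUnion (Finset.mem_range.mpr (by norm_num : (0:ℕ) < 20)) ?_
  constructor
  · rw [mdegree_zero]; norm_num
  · simp

lemma isOrderIdeal_M : IsOrderIdeal M := by
  constructor
  · exact ⟨0, zero_mem_M⟩
  · intro m hm m' hle
    obtain ⟨t, ht, hmt⟩ := Set.mem_iUnion₂.mp hm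
    rw [Finset.mem_range] at ht
    refine Set.mem_biUnion (Finset.mem_range.mpr ht) ?_
    obtain ⟨hd, hs⟩ := hmt
    have hd' : mdegree m' ≤ mdegree m := mdegree_mono hle
    refine ⟨le_trans hd' hd, ?_⟩
    intro i hi
    have hi' : i ∈ (↑m.support : Set (Fin 187)) := support_mono hle hi
    have hb := hs hi'
    obtain ⟨h1, h2⟩ := hb
    have hW : W t (mdegree m) ≤ W t (mdegree m') :=
      W_mono t ht (mdegree m) (by omega) (mdegree m') (by omega) hd'
    exact ⟨h1, by omega⟩

/-- degree-`j` slice of staircase `t`, for `1 ≤ j ≤ 9`, in normalized form. -/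
lemma slice_S_eq (t : ℕ) (j : ℕ) (hj : j ≤ 9) :
    {m | m ∈ S t ∧ mdegree m = j}
      = {m : Fin 187 →₀ ℕ | ↑m.support ⊆ block t j ∧ mdegree m = j} := by
  ext m
  simp only [Set.mem_setOf_eq, S]
  constructor
  · rintro ⟨⟨hd, hs⟩, hdeg⟩
    exact ⟨hdeg ▸ hs, hdeg⟩
  · rintro ⟨hs, hdeg⟩
    exact ⟨⟨by omega, hdeg ▸ hs⟩, hdeg⟩

lemma slice_S_ncard (t : ℕ) (ht : t < 20) (j : ℕ) (hj : j ≤ 9) :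
    {m | m ∈ S t ∧ mdegree m = j}.ncard = Nat.multichoose (W t j) j := by
  rw [slice_S_eq t j hj]
  exact ncard_slice (off t) (W t j) j (W_bound t ht j (by omega))

lemma slice_S_finite (t : ℕ) (j : ℕ) (hj : j ≤ 9) :
    {m | m ∈ S t ∧ mdegree m = j}.Finite := by
  rw [slice_S_eq t j hj]; exact finite_slice _ j

lemma slice_S_disjoint (t t' : ℕ) (ht : t < 20) (ht' : t' < 20) (hne : t ≠ t')
    (j : ℕ) (hj1 : 1 ≤ j) (hj : j ≤ 9) :
    Disjoint {m | m ∈ S t ∧ mdegree m = j} {m | m ∈ S t' ∧ mdegree m = j} := by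
  rw [Set.disjoint_left]
  rintro m ⟨⟨_, hs⟩, hdeg⟩ ⟨⟨_, hs'⟩, _⟩
  have hnz : m ≠ 0 := by
    intro h0
    rw [h0, mdegree_zero] at hdeg
    omega
  obtain ⟨i, hi⟩ := Finsupp.support_nonempty_iff.mpr hnz
  have hb := hs (by exact hi)
  have hb' := hs' (by exact hi)
  obtain ⟨h1, h2⟩ := hb
  obtain ⟨h1', h2'⟩ := hb'
  have hW : W t (mdegree m) ≤ W t 0 := W_mono t ht (mdegree m) (by omega) 0 (by omega) (by omega)
  have hW' : W t' (mdegree m) ≤ W t' 0 :=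
    W_mono t' ht' (mdegree m) (by omega) 0 (by omega) (by omega)
  rcases W_disj t ht t' ht' hne with hlt | hlt <;> omega

/-- `ncard` of a finite disjoint union. -/
lemma ncard_biUnion {α : Type*} :
    ∀ (n : ℕ) (A : ℕ → Set α), (∀ t, (A t).Finite) →
      (∀ t1 t2, t1 ≠ t2 → Disjoint (A t1) (A t2)) →
      (⋃ t ∈ Finset.range n, A t).ncard = ∑ t ∈ Finset.range n, (A t).ncard := by
  intro n
  induction n with
  | zero => simp
  | succ k ih =>
    intro A hf hd
    have hfin : (⋃ t ∈ Finset.range k, A t).Finite :=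
      Set.Finite.biUnion (Finset.finite_toSet _) fun t _ => hf t
    have hdisj : Disjoint (A k) (⋃ t ∈ Finset.range k, A t) := by
      rw [Set.disjoint_right]
      intro x hx hxAk
      obtain ⟨t, ht, hxt⟩ := Set.mem_iUnion₂.mp hx
      rw [Finset.mem_range] at ht
      exact Set.disjoint_left.mp (hd k t (by omega)) hxAk hxt
    rw [Finset.range_add_one, Finset.set_biUnion_insert,
      Set.ncard_union_eq hdisj (hf k) hfin, ih A hf hd, Finset.sum_insert (by simp)]

lemma slice_M_eq (j : ℕ) :
    {m | m ∈ M ∧ mdegree m = j}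
      = ⋃ t ∈ Finset.range 20, {m | m ∈ S t ∧ mdegree m = j} := by
  ext m
  simp only [Set.mem_setOf_eq, M, Set.mem_iUnion, Finset.mem_range, exists_prop]
  tauto

lemma slice_M_ncard_pos (j : ℕ) (hj1 : 1 ≤ j) (hj : j ≤ 9) :
    {m | m ∈ M ∧ mdegree m = j}.ncard = h j := by
  rw [slice_M_eq j]
  let A : ℕ → Set (Fin 187 →₀ ℕ) :=
    fun t => if t < 20 then {m | m ∈ S t ∧ mdegree m = j} else ∅
  have hA : ∀ t ∈ Finset.range 20, {m | m ∈ S t ∧ mdegree m = j} = A t := by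
    intro t ht
    rw [Finset.mem_range] at ht
    simp [A, ht]
  rw [Set.iUnion₂_congr hA, ncard_biUnion 20 A ?_ ?_]
  · rw [Finset.sum_congr rfl (fun t ht => by
      rw [← hA t ht, slice_S_ncard t (Finset.mem_range.mp ht) j hj, multichoose_eq_mc])]
    exact W_sum j (by omega) hj1
  · intro t
    by_cases ht : t < 20
    · simp only [A, if_pos ht]; exact slice_S_finite t j hj
    · simp [A, if_neg ht]
  · intro t1 t2 hne
    by_cases h1 : t1 < 20
    · by_cases h2 : t2 < 20
      · simp only [A, if_pos h1, if_pos h2]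
        exact slice_S_disjoint t1 t2 h1 h2 hne j hj1 hj
      · simp [A, if_neg h2]
    · simp [A, if_neg h1]

lemma slice_M_ncard_zero :
    {m | m ∈ M ∧ mdegree m = 0}.ncard = 1 := by
  have : {m | m ∈ M ∧ mdegree m = 0} = {(0 : Fin 187 →₀ ℕ)} := by
    ext m
    simp only [Set.mem_setOf_eq, Set.mem_singleton_iff]
    constructor
    · rintro ⟨_, hdeg⟩
      exact (mdegree_eq_zero_iff m).mp hdeg
    · rintro rfl
      exact ⟨zero_mem_M, mdegree_zero⟩
  rw [this, Set.ncard_singleton]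

end C11

/-- The sequence `(h 0, …, h 9)` is an `O`-sequence—there is an order ideal of monomials
`M` with exactly `h j` monomials of degree `j` for each `0 ≤ j ≤ 9`—but it is not
flawless, since the condition `h i ≤ h (9 - i)` fails at `i = 3`: `h 3 > h 6`. -/
theorem oSequence_C11_not_flawless :
    (∃ (r : ℕ) (M : Set (Fin r →₀ ℕ)), IsOrderIdeal M ∧
        ∀ j ≤ 9, {m ∈ M | mdegree m = j}.ncard = h j) ∧
      ¬((∀ i ≤ 9 / 2, h i ≤ h (9 - i)) ∧ (∀ i j, i ≤ j → j ≤ 9 / 2 → h i ≤ h j)) ∧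
      h 3 > h 6 := by
  refine ⟨⟨187, C11.M, C11.isOrderIdeal_M, ?_⟩, ?_, by decide⟩
  · intro j hj
    rcases Nat.eq_zero_or_pos j with rfl | hpos
    · exact C11.slice_M_ncard_zero
    · exact C11.slice_M_ncard_pos j hpos hj
  · rintro ⟨hfl, -⟩
    have := hfl 3 (by norm_num)
    simp [h] at this
end
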